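/- Antitonicity of feasibility in the probability level for the sMO-PoP model: let 0 < φ ≤ φ' and suppose that for every element i and criterion p the set A_{ip}(φ') = {σ ∈ Σ : α_{ip}(σ) ≥ φ'} is nonempty. If binary variables x_j ∈ {0,1}, y_{ij} ∈ {0,1} satisfy the requirement constraints at level φ', i.e. Σ_{i=1}^m v_{iph}(φ') y_{ij} ≥ u_{jph} x_j for every (j,p,h) ∈ D, then they also satisfy these constraints at level φ, i.e. Σ_{i=1}^m v_{iph}(φ) y_{ij} ≥ u_{jph} x_j for every (j,p,h) ∈ D. Hence the feasible region of the sMO-PoP model shrinks as φ increases. -/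

import Mathlib

open Finset

/-- Exceedance probability: `alpha π g σ = ∑_{o : g o ≥ g σ} π o`. -/
noncomputable def alpha {S : Type*} [Fintype S] (π : S → ℝ) (g : S → ℝ) (σ : S) : ℝ :=
  ∑ o ∈ Finset.univ.filter (fun o => g σ ≤ g o), π o

/-- The set `A(φ) = {σ ∈ Σ : α(σ) ≥ φ}`. -/
noncomputable def Aset {S : Type*} [Fintype S] (π : S → ℝ) (g : S → ℝ) (φ : ℝ) : Finset S :=
  Finset.univ.filter (fun σ => φ ≤ alpha π g σ)

/-- `ρ(φ) = max {g σ : σ ∈ A(φ)}` (as a supremum; it is attained when `A(φ)` is nonempty). -/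
noncomputable def rhoSup {S : Type*} [Fintype S] (π : S → ℝ) (g : S → ℝ) (φ : ℝ) : ℝ :=
  sSup (g '' {σ | φ ≤ alpha π g σ})

-- `sSup ∅ = 0` in `ℝ`: with `A(φ')` empty, `rhoSup` at `φ'` could exceed its value at `φ`.
theorem rhoSup_antitone {S : Type*} [Fintype S] {π g : S → ℝ} {φ φ' : ℝ} (hle : φ ≤ φ')
    (hne : (Aset π g φ').Nonempty) : rhoSup π g φ' ≤ rhoSup π g φ := by
  obtain ⟨σ, hσ⟩ := hne
  exact csSup_le_csSup (Set.toFinite _).bddAbove ⟨g σ, σ, (mem_filter.1 hσ).2, rfl⟩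
    (Set.image_mono fun _ hτ => hle.trans hτ)

theorem smopop_feasibility_antitone_general {S : Type*} [Fintype S]
    {m n : ℕ} {Crit Lv : Type*}
    (π : S → ℝ)
    (g : Fin m → Crit → S → ℝ)
    (l : Crit → Lv → ℝ)
    (u : Fin n → Crit → Lv → ℕ)
    (D : Set (Fin n × Crit × Lv))
    (x : Fin n → ℕ) (y : Fin m → Fin n → ℕ)
    (φ φ' : ℝ) (hle : φ ≤ φ')
    (hne' : ∀ i p, (Aset π (g i p) φ').Nonempty)
    (v : Fin m → Crit → Lv → ℝ → ℕ)
    (hv : ∀ i p h ψ, v i p h ψ = if l p h ≤ rhoSup π (g i p) ψ then 1 else 0)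
    (hreq' : ∀ j p h, (j, p, h) ∈ D → u j p h * x j ≤ ∑ i, v i p h φ' * y i j) :
    ∀ j p h, (j, p, h) ∈ D → u j p h * x j ≤ ∑ i, v i p h φ * y i j := by
  intro j p h hD
  have hv_mono (i : Fin m) : v i p h φ' ≤ v i p h φ := by
    have hρ := rhoSup_antitone hle (hne' i p)
    rw [hv, hv]
    split_ifs <;> grind
  calc u j p h * x j ≤ ∑ i, v i p h φ' * y i j := hreq' j p h hD
    _ ≤ ∑ i, v i p h φ * y i j := by gcongr with i; exact hv_mono i

/-- Antitonicity of feasibility in the probability level for the sMO-PoP model: if the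
requirement constraints hold at level `φ'`, then they also hold at any smaller positive
level `φ`; hence the feasible region of the sMO-PoP model shrinks as `φ` increases. -/
theorem smopop_feasibility_antitone {S : Type*} [Fintype S] [Nonempty S]
    {m n : ℕ} {Crit Lv : Type*}
    (π : S → ℝ) (hπ : ∀ σ, 0 ≤ π σ) (hsum : ∑ σ, π σ = 1)
    (g : Fin m → Crit → S → ℝ)
    (l : Crit → Lv → ℝ)
    (u : Fin n → Crit → Lv → ℕ)
    (D : Set (Fin n × Crit × Lv))
    (x : Fin n → ℕ) (y : Fin m → Fin n → ℕ)
    (hx : ∀ j, x j ≤ 1) (hy : ∀ i j, y i j ≤ 1)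
    (φ φ' : ℝ) (hφ : 0 < φ) (hle : φ ≤ φ')
    (hne' : ∀ i p, (Aset π (g i p) φ').Nonempty)
    (v : Fin m → Crit → Lv → ℝ → ℕ)
    (hv : ∀ i p h ψ, v i p h ψ = if l p h ≤ rhoSup π (g i p) ψ then 1 else 0)
    (hreq' : ∀ j p h, (j, p, h) ∈ D → u j p h * x j ≤ ∑ i, v i p h φ' * y i j) :
    ∀ j p h, (j, p, h) ∈ D → u j p h * x j ≤ ∑ i, v i p h φ * y i j :=
  smopop_feasibility_antitone_general π g l u D x y φ φ' hle hne' v hv hreq'
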